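/- Let d ≥ 1 be an integer and c, δ, h₀ real numbers with 0 < c·h₀ < c·δ ≤ 1. Then every complex root of p(λ) = λ^{d+1} − (1 − cδ)λᵈ − c·h₀ satisfies |λ| < 1. -/

import Mathlib

/-! On `‖z‖ ≥ 1` the factorization `z ^ d * (z - a)` has norm at least `‖z - a‖ ≥ 1 - ‖a‖`, which
exceeds `‖b‖` as soon as `‖a‖ + ‖b‖ < 1`; so no root of `z ^ d * (z - a) - b` lies outside the open
unit disc. -/

theorem norm_lt_one_of_pow_mul_sub_eq {𝕜 : Type*} [NormedDivisionRing 𝕜] {z a b : 𝕜} (d : ℕ)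
    (hab : ‖a‖ + ‖b‖ < 1) (h : z ^ d * (z - a) = b) : ‖z‖ < 1 := by
  by_contra! hz
  have : 1 - ‖a‖ ≤ ‖b‖ := calc
    1 - ‖a‖ ≤ ‖z - a‖ := by linarith [norm_sub_norm_le z a]
    _ ≤ ‖z‖ ^ d * ‖z - a‖ := le_mul_of_one_le_left (norm_nonneg _) (one_le_pow₀ hz)
    _ = ‖b‖ := by rw [← h, norm_mul, norm_pow]
  linarith

theorem nonconsensus_mode_roots_inside_unit_circle_general (d : ℕ)
    (c δ h₀ : ℝ) (h1 : 0 < c * h₀) (h2 : c * h₀ < c * δ) (h3 : c * δ ≤ 1) :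
    ∀ lam : ℂ,
      lam ^ (d + 1) - (1 - (c * δ : ℝ)) * lam ^ d - (c * h₀ : ℝ) = 0 →
        ‖lam‖ < 1 := by
  intro lam hroot
  refine norm_lt_one_of_pow_mul_sub_eq d (a := ((1 - c * δ : ℝ) : ℂ)) (b := ((c * h₀ : ℝ) : ℂ))
    ?_ ?_
  · rw [Complex.norm_real, Complex.norm_real, Real.norm_of_nonneg (by linarith),
      Real.norm_of_nonneg h1.le]
    linarith
  · push_cast at hroot ⊢
    linear_combination hroot

/-- If `0 < ch₀ < cδ ≤ 1`, every complex root of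
`p(λ) = λ^{d+1} − (1 − cδ)λᵈ − ch₀` lies strictly inside the unit circle. -/
theorem nonconsensus_mode_roots_inside_unit_circle (d : ℕ) (hd : 1 ≤ d)
    (c δ h₀ : ℝ) (h1 : 0 < c * h₀) (h2 : c * h₀ < c * δ) (h3 : c * δ ≤ 1) :
    ∀ lam : ℂ,
      lam ^ (d + 1) - (1 - (c * δ : ℝ)) * lam ^ d - (c * h₀ : ℝ) = 0 →
        ‖lam‖ < 1 :=
  nonconsensus_mode_roots_inside_unit_circle_general d c δ h₀ h1 h2 h3
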